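/- In the ILT model, for t > 0 the average degree of G_t equals (3/2)^t · (vol(G_0)/n_0 + 2) − 2. -/

import Mathlib

open SimpleGraph Finset

universe u
variable {V : Type u}

/-- One step of the Iterated Local Transitivity model: every vertex `x` gets a
clone `Sum.inr x` joined to `x` and all of its neighbours; old vertices are `Sum.inl`. -/
def ILTstep (G : SimpleGraph V) : SimpleGraph (V ⊕ V) where
  Adj a b := match a, b with
    | Sum.inl x, Sum.inl y => G.Adj x y
    | Sum.inl x, Sum.inr y => x = y ∨ G.Adj x y
    | Sum.inr x, Sum.inl y => x = y ∨ G.Adj x y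
    | Sum.inr _, Sum.inr _ => False
  symm := by
    refine ⟨?_⟩
    rintro (x | x) (y | y) h
    · exact G.adj_symm h
    · exact h.imp Eq.symm (fun hh => G.adj_symm hh)
    · exact h.imp Eq.symm (fun hh => G.adj_symm hh)
    · exact h.elim
  loopless := by
    refine ⟨?_⟩
    rintro (x | x) h
    · exact G.irrefl h
    · exact h

instance ILTstepDecAdj (G : SimpleGraph V) [DecidableEq V] [DecidableRel G.Adj] :
    DecidableRel (ILTstep G).Adj := fun a b =>
  match a, b with
  | Sum.inl x, Sum.inl y => inferInstanceAs (Decidable (G.Adj x y))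
  | Sum.inl x, Sum.inr y => inferInstanceAs (Decidable (x = y ∨ G.Adj x y))
  | Sum.inr x, Sum.inl y => inferInstanceAs (Decidable (x = y ∨ G.Adj x y))
  | Sum.inr _, Sum.inr _ => inferInstanceAs (Decidable False)

/-- The vertex set of the ILT model at time `t`. -/
def ILTV (V : Type u) : ℕ → Type u
  | 0 => V
  | t + 1 => ILTV V t ⊕ ILTV V t

/-- The graph of the ILT model at time `t`, starting from `G`. -/
def ILTG (G : SimpleGraph V) : (t : ℕ) → SimpleGraph (ILTV V t)
  | 0 => G
  | t + 1 => ILTstep (ILTG G t)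

instance ILTVFintype [Fintype V] : ∀ t, Fintype (ILTV V t)
  | 0 => inferInstanceAs (Fintype V)
  | t + 1 => letI := ILTVFintype t
             inferInstanceAs (Fintype (ILTV V t ⊕ ILTV V t))

instance ILTVDecEq [DecidableEq V] : ∀ t, DecidableEq (ILTV V t)
  | 0 => inferInstanceAs (DecidableEq V)
  | t + 1 => letI := ILTVDecEq t
             inferInstanceAs (DecidableEq (ILTV V t ⊕ ILTV V t))

instance ILTGDecAdj (G : SimpleGraph V) [DecidableEq V] [DecidableRel G.Adj] :
    ∀ t, DecidableRel (ILTG G t).Adj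
  | 0 => inferInstanceAs (DecidableRel G.Adj)
  | t + 1 => letI : DecidableEq (ILTV V t) := ILTVDecEq t
             letI : DecidableRel (ILTG G t).Adj := ILTGDecAdj G t
             ILTstepDecAdj (ILTG G t)

/-- The volume of a graph: the sum of the degrees of its vertices. -/
def graphVol [Fintype V] (G : SimpleGraph V) [DecidableRel G.Adj] : ℕ :=
  ∑ v, G.degree v

/-- The Wiener index: the sum of distances over unordered pairs of vertices. -/
noncomputable def wienerIndex [Fintype V] (G : SimpleGraph V) : ℕ :=
  (∑ x : V, ∑ y : V, G.dist x y) / 2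

/-! Every vertex of degree `d` gets degree `2d + 1` in the next step, and its clone degree `d + 1`,
so `vol(G_{t+1}) = 3 vol(G_t) + 2 n_t`. Together with `n_{t+1} = 2 n_t` this makes
`vol(G_t) + 2 n_t` triple at each step, i.e. `vol(G_t) + 2 n_t = 3^t (vol(G_0) + 2 n_0)`. -/

lemma SimpleGraph.card_insert_self_neighborFinset [Fintype V] [DecidableEq V] (G : SimpleGraph V)
    [DecidableRel G.Adj] (x : V) : #(insert x (G.neighborFinset x)) = G.degree x + 1 :=
  card_insert_of_notMem (G.notMem_neighborFinset_self x)

namespace ILTstep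

section Adj

variable (G : SimpleGraph V) {x y : V}

@[simp] lemma adj_inl_inl : (ILTstep G).Adj (Sum.inl x) (Sum.inl y) ↔ G.Adj x y :=
  Iff.rfl

@[simp] lemma adj_inl_inr : (ILTstep G).Adj (Sum.inl x) (Sum.inr y) ↔ x = y ∨ G.Adj x y :=
  Iff.rfl

@[simp] lemma adj_inr_inl : (ILTstep G).Adj (Sum.inr x) (Sum.inl y) ↔ x = y ∨ G.Adj x y :=
  Iff.rfl

@[simp] lemma not_adj_inr_inr : ¬(ILTstep G).Adj (Sum.inr x) (Sum.inr y) :=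
  id

end Adj

variable [Fintype V] [DecidableEq V] (G : SimpleGraph V) [DecidableRel G.Adj] (x : V)

lemma neighborFinset_inl :
    (ILTstep G).neighborFinset (Sum.inl x)
      = (G.neighborFinset x).disjSum (insert x (G.neighborFinset x)) := by
  ext (y | y) <;> simp [eq_comm]

lemma neighborFinset_inr :
    (ILTstep G).neighborFinset (Sum.inr x) = (insert x (G.neighborFinset x)).disjSum ∅ := by
  ext (y | y) <;> simp [eq_comm]

lemma degree_inl : (ILTstep G).degree (Sum.inl x) = 2 * G.degree x + 1 := by
  rw [← card_neighborFinset_eq_degree, neighborFinset_inl, card_disjSum,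
    card_insert_self_neighborFinset, card_neighborFinset_eq_degree]
  ring

lemma degree_inr : (ILTstep G).degree (Sum.inr x) = G.degree x + 1 := by
  rw [← card_neighborFinset_eq_degree, neighborFinset_inr, card_disjSum,
    card_insert_self_neighborFinset, card_empty]

lemma graphVol_eq : graphVol (ILTstep G) = 3 * graphVol G + 2 * Fintype.card V := by
  simp only [graphVol, Fintype.sum_sum_type, degree_inl, degree_inr, sum_add_distrib, ← mul_sum,
    sum_const, card_univ, smul_eq_mul]
  ring

lemma graphVol_add_two_mul_card :
    graphVol (ILTstep G) + 2 * Fintype.card (V ⊕ V) = 3 * (graphVol G + 2 * Fintype.card V) := by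
  rw [graphVol_eq, Fintype.card_sum]
  ring

end ILTstep

lemma card_ILTV [Fintype V] (t : ℕ) : Fintype.card (ILTV V t) = 2 ^ t * Fintype.card V := by
  induction t with
  | zero => rw [pow_zero, one_mul]; rfl
  | succ t ih =>
    rw [pow_succ, mul_comm _ 2, mul_assoc, ← ih, two_mul]
    exact Fintype.card_sum

lemma graphVol_ILTG_add_two_mul_card [Fintype V] [DecidableEq V] (G : SimpleGraph V)
    [DecidableRel G.Adj] (t : ℕ) :
    graphVol (ILTG G t) + 2 * Fintype.card (ILTV V t)
      = 3 ^ t * (graphVol G + 2 * Fintype.card V) := by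
  induction t with
  | zero => rw [pow_zero, one_mul]; rfl
  | succ t ih =>
    let := ILTVDecEq (V := V) t
    rw [pow_succ, mul_comm _ 3, mul_assoc, ← ih]
    exact ILTstep.graphVol_add_two_mul_card (ILTG G t)

theorem ILT_average_degree_general [Fintype V] [DecidableEq V] [Nonempty V]
    (G : SimpleGraph V) [DecidableRel G.Adj] (t : ℕ) :
    (graphVol (ILTG G t) : ℚ) / (Fintype.card (ILTV V t))
      = (3 / 2) ^ t * ((graphVol G : ℚ) / (Fintype.card V) + 2) - 2 := by
  have hvol : (graphVol (ILTG G t) : ℚ) + 2 * (2 ^ t * Fintype.card V)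
      = 3 ^ t * (graphVol G + 2 * Fintype.card V) := by
    exact_mod_cast card_ILTV (V := V) t ▸ graphVol_ILTG_add_two_mul_card G t
  have hn : (Fintype.card V : ℚ) ≠ 0 := by exact_mod_cast Fintype.card_ne_zero
  rw [card_ILTV, Nat.cast_mul, Nat.cast_pow, eq_sub_of_add_eq hvol, div_pow]
  field_simp
  ring

theorem ILT_average_degree [Fintype V] [DecidableEq V] [Nonempty V]
    (G : SimpleGraph V) [DecidableRel G.Adj] (t : ℕ) (ht : 0 < t) :
    (graphVol (ILTG G t) : ℚ) / (Fintype.card (ILTV V t))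
      = (3 / 2) ^ t * ((graphVol G : ℚ) / (Fintype.card V) + 2) - 2 :=
  ILT_average_degree_general G t
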